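/- Let G be a connected simple graph on n vertices with m edges and chromatic number k ≥ 4, and suppose m > C(k,2) + n − k (equivalently, G is not obtained from a k-clique by recursively attaching leaves). Define the chromatic polynomial π(G,x) = Σ_{r=1}^{n} a_r(G)·(x)_↓r. Then for every real number x with x > n − 2 + (C(n,2) − C(k,2) − n + k)^2, one has π(G,x) < (x)_↓k · (x−1)^(n−k). -/

import Mathlib

/-- The number of `i`-colour partitions of `G`, that is, partitions of the vertex set of `G`
into `i` nonempty independent sets. -/
noncomputable def numPartitions {V : Type} [Fintype V] [DecidableEq V]
    (G : SimpleGraph V) (i : ℕ) : ℕ :=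
  Nat.card {P : Finpartition (Finset.univ : Finset V) //
    P.parts.card = i ∧ ∀ p ∈ P.parts, ∀ u ∈ p, ∀ v ∈ p, ¬ G.Adj u v}

/-- The chromatic polynomial of `G`, evaluated at a real number `x`:
`π(G,x) = Σ_{r=1}^{n} a_r(G) · (x)_↓r`. -/
noncomputable def chromPolyR {V : Type} [Fintype V] [DecidableEq V]
    (G : SimpleGraph V) (x : ℝ) : ℝ :=
  ∑ r ∈ Finset.Icc 1 (Fintype.card V), (numPartitions G r : ℝ) * (descPochhammer ℝ r).eval x

open Polynomial Finset

section Aux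


lemma dp_succ (r : ℕ) (x : ℝ) :
    (descPochhammer ℝ (r+1)).eval x = (descPochhammer ℝ r).eval x * (x - r) := by
  rw [descPochhammer_succ_right]; simp

lemma dp_pos {x : ℝ} : ∀ {r : ℕ}, (r : ℝ) - 1 < x → 0 < (descPochhammer ℝ r).eval x := by
  intro r
  induction r with
  | zero => intro _; simp [descPochhammer]
  | succ r ih =>
    intro h
    rw [dp_succ]
    have hr : (r : ℝ) < x := by push_cast at h ⊢; linarith
    exact mul_pos (ih (by linarith)) (by linarith)

lemma dp_grow {x y : ℝ} (hy : 0 < y) :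
    ∀ (j r : ℕ), 0 < (descPochhammer ℝ r).eval x → ((r + j : ℝ) - 1 ≤ x - y) →
      (descPochhammer ℝ r).eval x * y ^ j ≤ (descPochhammer ℝ (r + j)).eval x := by
  intro j
  induction j with
  | zero => intro r h _; simp
  | succ j ih =>
    intro r hr hxy
    have h1 : (descPochhammer ℝ r).eval x * y ^ j ≤ (descPochhammer ℝ (r + j)).eval x := by
      apply ih r hr; push_cast at hxy ⊢; linarith
    have h2 : y ≤ x - (r + j : ℕ) := by push_cast at hxy ⊢; linarith
    have h3 : (descPochhammer ℝ (r + j + 1)).eval x = (descPochhammer ℝ (r+j)).eval x * (x - (r+j : ℕ)) := dp_succ _ _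
    rw [show r + (j+1) = r + j + 1 from rfl, h3, pow_succ, ← mul_assoc]
    have hpos : 0 < (descPochhammer ℝ r).eval x * y ^ j := mul_pos hr (pow_pos hy j)
    push_cast
    calc (descPochhammer ℝ r).eval x * y ^ j * y ≤ ((descPochhammer ℝ (r+j)).eval x) * y := by
          apply mul_le_mul_of_nonneg_right h1 hy.le
      _ ≤ (descPochhammer ℝ (r+j)).eval x * (x - ((r:ℝ) + j)) := by
          apply mul_le_mul_of_nonneg_left _ (le_trans hpos.le h1)
          push_cast at h2; linarith

lemma expand_desc (k : ℕ) (hk : 1 ≤ k) : ∀ t : ℕ, ∃ c : ℕ → ℕ,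
    (∀ r, r < k → c r = 0) ∧ (∀ r, k + t < r → c r = 0) ∧ c (k+t) = 1 ∧
    (1 ≤ t → c (k+t-1) = ∑ i ∈ Finset.Ico (k-1) (k+t-1), i) ∧
    ∀ x : ℝ, (descPochhammer ℝ k).eval x * (x-1)^t
        = ∑ r ∈ Finset.Icc k (k+t), (c r : ℝ) * (descPochhammer ℝ r).eval x := by
  intro t
  induction t with
  | zero =>
    refine ⟨fun r => if r = k then 1 else 0, ?_, ?_, by simp, by omega, ?_⟩
    · intro r hr; simp [Nat.ne_of_lt hr]
    · intro r hr; simp; omega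
    · intro x; simp
  | succ t ih =>
    obtain ⟨c, hlo, hhi, htop, hsub, hid⟩ := ih
    refine ⟨fun r => (if r = 0 then 0 else c (r-1)) + (r-1) * c r, ?_, ?_, ?_, ?_, ?_⟩
    · intro r hr
      rcases Nat.eq_zero_or_pos r with h | h
      · simp [h, hlo 0 (by omega)]
      · simp [Nat.pos_iff_ne_zero.mp h, hlo r hr, hlo (r-1) (by omega)]
    · intro r hr
      have h1 : c (r-1) = 0 := hhi _ (by omega)
      have h2 : c r = 0 := hhi _ (by omega)
      simp [h1, h2]
    · have : k + (t+1) ≠ 0 := by omega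
      simp only [this, if_false]
      rw [show k + (t+1) - 1 = k + t from by omega, htop, hhi _ (by omega)]
      simp
    · intro _
      have hne : k + (t+1) - 1 ≠ 0 := by omega
      have hsplit : ∑ i ∈ Finset.Ico (k-1) (k+(t+1)-1), i
          = (∑ i ∈ Finset.Ico (k-1) (k+t-1), i) + (k+t-1) := by
        rcases Nat.eq_zero_or_pos t with h | h
        · subst h
          rw [show k+(0+1)-1 = (k-1)+1 from by omega]
          rw [Finset.sum_Ico_succ_top (by omega)]
          simp
        · rw [show k+(t+1)-1 = (k+t-1)+1 from by omega, Finset.sum_Ico_succ_top (by omega)]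
      simp only [hne, if_false]
      rw [hsplit, show k + (t+1) - 1 = k + t from by omega, htop, mul_one]
      rcases Nat.eq_zero_or_pos t with h | h
      · subst h
        rw [hlo (k + 0 - 1) (by omega)]
        simp
      · rw [hsub h]
    · intro x
      have step : ∀ r : ℕ, 1 ≤ r →
          (descPochhammer ℝ r).eval x * (x - 1)
            = (descPochhammer ℝ (r+1)).eval x + ((r:ℝ) - 1) * (descPochhammer ℝ r).eval x := by
        intro r hr
        rw [dp_succ]; ring
      rw [pow_succ, ← mul_assoc, hid x, Finset.sum_mul]
      have lhs_eq : ∑ r ∈ Finset.Icc k (k+t), (c r : ℝ) * (descPochhammer ℝ r).eval x * (x-1)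
          = (∑ r ∈ Finset.Icc k (k+t), (c r : ℝ) * (descPochhammer ℝ (r+1)).eval x)
            + ∑ r ∈ Finset.Icc k (k+t), ((r:ℝ) - 1) * (c r : ℝ) * (descPochhammer ℝ r).eval x := by
        rw [← Finset.sum_add_distrib]
        apply Finset.sum_congr rfl
        intro r hr
        simp only [Finset.mem_Icc] at hr
        rw [mul_assoc, step r (by omega)]
        ring
      rw [lhs_eq]
      -- shift the first sum
      have shift : ∑ r ∈ Finset.Icc k (k+t), (c r : ℝ) * (descPochhammer ℝ (r+1)).eval x
          = ∑ r ∈ Finset.Icc (k+1) (k+t+1), (c (r-1) : ℝ) * (descPochhammer ℝ r).eval x := by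
        rw [← Finset.map_add_right_Icc _ _ 1, Finset.sum_map]
        simp
      rw [shift]
      -- now expand RHS
      have rhs_eq : ∑ r ∈ Finset.Icc k (k+(t+1)),
            (((if r = 0 then 0 else c (r-1)) + (r-1) * c r : ℕ) : ℝ) * (descPochhammer ℝ r).eval x
          = (∑ r ∈ Finset.Icc k (k+t+1), (c (r-1) : ℝ) * (descPochhammer ℝ r).eval x)
            + ∑ r ∈ Finset.Icc k (k+t+1), ((r:ℝ) - 1) * (c r : ℝ) * (descPochhammer ℝ r).eval x := by
        rw [show k+(t+1) = k+t+1 from rfl, ← Finset.sum_add_distrib]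
        apply Finset.sum_congr rfl
        intro r hr
        simp only [Finset.mem_Icc] at hr
        have hr0 : r ≠ 0 := by omega
        have : ((r - 1 : ℕ) : ℝ) = (r : ℝ) - 1 := by
          have : 1 ≤ r := by omega
          push_cast [this]; ring
        simp only [hr0, if_false]
        push_cast [this]
        ring
      rw [rhs_eq]
      congr 1
      · -- Icc k (k+t+1) vs Icc (k+1) (k+t+1) : extra bottom term is zero
        rw [show Finset.Icc k (k+t+1) = insert k (Finset.Icc (k+1) (k+t+1)) from ?_]
        · rw [Finset.sum_insert (by simp)]
          rw [hlo (k-1) (by omega)]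
          simp
        · rw [Finset.Icc_add_one_left_eq_Ioc, Finset.Ioc_insert_left (by omega)]
      · -- extend top by zero term
        rw [Finset.sum_Icc_succ_top (by omega), hhi (k+t+1) (by omega)]
        simp


lemma geo_aux {w : ℝ} (h0 : 0 ≤ w) (h1 : w < 1) : ∀ J : ℕ, ∑ j ∈ Finset.Icc 1 J, w ^ j ≤ w / (1 - w) := by
  have h1w : 0 < 1 - w := by linarith
  have key : ∀ J : ℕ, ∑ j ∈ Finset.Icc 1 J, w ^ j ≤ (w - w ^ (J+1)) / (1 - w) := by
    intro J
    induction J with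
    | zero => simp
    | succ J ih =>
      rw [Finset.sum_Icc_succ_top (by omega)]
      have heq : (w - w ^ (J + 1)) / (1 - w) + w ^ (J+1) = (w - w ^ (J + 1 + 1)) / (1 - w) := by
        field_simp
        ring
      linarith
  intro J
  refine (key J).trans ?_
  exact (div_le_div_iff_of_pos_right h1w).mpr (by nlinarith [pow_nonneg h0 (J+1)])

lemma gauss_sum : ∀ a : ℕ, ∑ i ∈ Finset.range a, i = a.choose 2 := by
  intro a
  induction a with
  | zero => simp
  | succ a ih =>
    rw [Finset.sum_range_succ, ih, show a + 1 = a + 1 from rfl]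
    have : (a+1).choose 2 = a.choose 1 + a.choose 2 := Nat.choose_succ_succ a 1
    rw [this, Nat.choose_one_right]
    omega


variable {V : Type} [Fintype V] [DecidableEq V] [LinearOrder V]

/-- min of the part containing v -/
noncomputable def pmin (P : Finpartition (Finset.univ : Finset V)) (v : V) : V :=
  (P.part v).min' (P.nonempty_of_mem_parts (P.part_mem.mpr (Finset.mem_univ v)))

lemma pmin_mem (P : Finpartition (Finset.univ : Finset V)) (v : V) : pmin P v ∈ P.part v :=
  Finset.min'_mem _ _

lemma pmin_le (P : Finpartition (Finset.univ : Finset V)) (v : V) : pmin P v ≤ v :=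
  Finset.min'_le _ _ (P.mem_part (Finset.mem_univ v))

lemma part_pmin (P : Finpartition (Finset.univ : Finset V)) (v : V) :
    P.part (pmin P v) = P.part v :=
  P.part_eq_of_mem (P.part_mem.mpr (Finset.mem_univ v)) (pmin_mem P v)

lemma pmin_eq_iff (P : Finpartition (Finset.univ : Finset V)) (u v : V) :
    pmin P u = pmin P v ↔ P.part u = P.part v := by
  constructor
  · intro h
    have h1 : P.part u = P.part (pmin P u) := (part_pmin P u).symm
    rw [h1, h, part_pmin]
  · intro h
    unfold pmin
    congr 1

noncomputable def encode (P : Finpartition (Finset.univ : Finset V)) : Finset (Sym2 V) :=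
  (Finset.univ.filter (fun v => pmin P v ≠ v)).image (fun v => s(pmin P v, v))

lemma card_fixed (P : Finpartition (Finset.univ : Finset V)) :
    (Finset.univ.filter (fun v => pmin P v = v)).card = P.parts.card := by
  apply Finset.card_bij (fun v _ => P.part v)
  · intro v hv
    exact P.part_mem.mpr (Finset.mem_univ v)
  · intro u hu v hv h
    simp only [Finset.mem_filter] at hu hv
    have : pmin P u = pmin P v := by unfold pmin; congr 1
    rw [hu.2, hv.2] at this; exact this
  · intro p hp
    refine ⟨(p.min' (P.nonempty_of_mem_parts hp)), ?_, ?_⟩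
    · have hmem : p.min' (P.nonempty_of_mem_parts hp) ∈ p := Finset.min'_mem _ _
      have hpart : P.part (p.min' (P.nonempty_of_mem_parts hp)) = p := P.part_eq_of_mem hp hmem
      simp only [Finset.mem_filter, Finset.mem_univ, true_and]
      unfold pmin
      simp_rw [hpart]
    · exact P.part_eq_of_mem hp (Finset.min'_mem _ _)

lemma card_encode (P : Finpartition (Finset.univ : Finset V)) :
    (encode P).card = Fintype.card V - P.parts.card := by
  have hinj : Set.InjOn (fun v => s(pmin P v, v))
      ↑(Finset.univ.filter (fun v => pmin P v ≠ v)) := by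
    intro u hu v hv h
    simp only [Finset.coe_filter, Set.mem_setOf_eq, Finset.mem_univ, true_and] at hu hv
    rw [Sym2.eq_iff] at h
    rcases h with ⟨h1, h2⟩ | ⟨h1, h2⟩
    · exact h2
    · exfalso
      have hu' : pmin P u < u := lt_of_le_of_ne (pmin_le P u) hu
      have hv' : pmin P v < v := lt_of_le_of_ne (pmin_le P v) hv
      have h3 : v < u := by rw [← h1]; exact hu'
      have h4 : u < v := by rw [h2]; exact hv'
      exact absurd (h3.trans h4) (lt_irrefl _)
  rw [encode, Finset.card_image_of_injOn hinj]
  have key := Finset.card_filter_add_card_filter_not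
    (s := (Finset.univ : Finset V)) (p := fun v => pmin P v = v)
  simp only [ne_eq] at key ⊢
  rw [card_fixed, Finset.card_univ] at key
  omega

lemma encode_subset_ne (G : SimpleGraph V) [DecidableRel G.Adj]
    (P : Finpartition (Finset.univ : Finset V))
    (hind : ∀ p ∈ P.parts, ∀ u ∈ p, ∀ v ∈ p, ¬ G.Adj u v) :
    encode P ⊆ Finset.univ.filter (fun z : Sym2 V => ¬ z.IsDiag ∧ z ∉ G.edgeFinset) := by
  intro z hz
  rw [encode, Finset.mem_image] at hz
  obtain ⟨v, hv, rfl⟩ := hz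
  simp only [Finset.mem_filter, Finset.mem_univ, true_and] at hv ⊢
  constructor
  · rw [Sym2.mk_isDiag_iff]; exact hv
  · rw [SimpleGraph.mem_edgeFinset, SimpleGraph.mem_edgeSet]
    exact hind (P.part v) (P.part_mem.mpr (Finset.mem_univ v)) _ (pmin_mem P v) _
      (P.mem_part (Finset.mem_univ v))

lemma encode_injective_aux {P Q : Finpartition (Finset.univ : Finset V)}
    (h : encode P ⊆ encode Q) (v : V) (hv : pmin P v ≠ v) : pmin Q v = pmin P v := by
  have hz : s(pmin P v, v) ∈ encode Q := by
    apply h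
    rw [encode, Finset.mem_image]
    exact ⟨v, by simp [hv], rfl⟩
  rw [encode, Finset.mem_image] at hz
  obtain ⟨u, hu, heq⟩ := hz
  simp only [Finset.mem_filter, Finset.mem_univ, true_and] at hu
  rw [Sym2.eq_iff] at heq
  rcases heq with ⟨h1, h2⟩ | ⟨h1, h2⟩
  · subst h2; exact h1
  · exfalso
    have hu' : pmin Q u < u := lt_of_le_of_ne (pmin_le Q u) hu
    have hv' : pmin P v < v := lt_of_le_of_ne (pmin_le P v) hv
    have h3 : pmin Q u < pmin P v := by rw [← h2]; exact hu'
    have h4 : pmin P v < pmin Q u := by rw [h1]; exact hv'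
    exact absurd (h3.trans h4) (lt_irrefl _)

lemma encode_injective {P Q : Finpartition (Finset.univ : Finset V)}
    (h : encode P = encode Q) : P = Q := by
  have hf : ∀ v, pmin P v = pmin Q v := by
    intro v
    by_cases h1 : pmin P v = v
    · by_cases h2 : pmin Q v = v
      · rw [h1, h2]
      · exact encode_injective_aux h.ge v h2
    · exact (encode_injective_aux h.le v h1).symm
  have hpart : ∀ v, P.part v = Q.part v := by
    intro v
    have key : ∀ (R : Finpartition (Finset.univ : Finset V)) (v : V),
        R.part v = Finset.univ.filter (fun u => pmin R u = pmin R v) := by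
      intro R v
      ext u
      simp only [Finset.mem_filter, Finset.mem_univ, true_and]
      rw [pmin_eq_iff]
      rw [← R.mem_part_iff_part_eq_part (Finset.mem_univ u) (Finset.mem_univ v)]
    rw [key P v, key Q v]
    simp_rw [hf]
  apply Finpartition.ext
  ext p
  constructor
  · intro hp
    obtain ⟨v, hv⟩ := P.nonempty_of_mem_parts hp
    have : P.part v = p := P.part_eq_of_mem hp hv
    rw [← this, hpart]
    exact Q.part_mem.mpr (Finset.mem_univ v)
  · intro hp
    obtain ⟨v, hv⟩ := Q.nonempty_of_mem_parts hp
    have : Q.part v = p := Q.part_eq_of_mem hp hv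
    rw [← this, ← hpart]
    exact P.part_mem.mpr (Finset.mem_univ v)


lemma ne_card (G : SimpleGraph V) [DecidableRel G.Adj] :
    (Finset.univ.filter (fun z : Sym2 V => ¬ z.IsDiag ∧ z ∉ G.edgeFinset)).card
      = (Fintype.card V).choose 2 - G.edgeFinset.card := by
  classical
  have hA : (Finset.univ.filter (fun z : Sym2 V => ¬ z.IsDiag)).card
      = (Fintype.card V).choose 2 := by
    rw [← Fintype.card_subtype]
    exact Sym2.card_subtype_not_diag
  have hsub : G.edgeFinset ⊆ Finset.univ.filter (fun z : Sym2 V => ¬ z.IsDiag) := by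
    intro e he
    simp only [Finset.mem_filter, Finset.mem_univ, true_and]
    exact SimpleGraph.not_isDiag_of_mem_edgeSet G (SimpleGraph.mem_edgeFinset.mp he)
  have heq : Finset.univ.filter (fun z : Sym2 V => ¬ z.IsDiag ∧ z ∉ G.edgeFinset)
      = (Finset.univ.filter (fun z : Sym2 V => ¬ z.IsDiag)) \ G.edgeFinset := by
    ext z
    simp [Finset.mem_sdiff, Finset.mem_filter]
  rw [heq, Finset.card_sdiff_of_subset hsub, hA]

lemma numPartitions_eq_zero_of_lt (G : SimpleGraph V) [DecidableRel G.Adj] {r k : ℕ}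
    (hk : G.chromaticNumber = k) (hr : r < k) : numPartitions G r = 0 := by
  rw [numPartitions]
  rw [Nat.card_eq_zero]
  left
  rw [isEmpty_subtype]
  rintro P ⟨hcard, hind⟩
  have C : G.Coloring {p // p ∈ P.parts} := by
    refine SimpleGraph.Coloring.mk (fun v => ⟨P.part v, P.part_mem.mpr (Finset.mem_univ v)⟩) ?_
    intro u v huv heq
    simp only [Subtype.mk_eq_mk] at heq
    have hv : v ∈ P.part u := by rw [heq]; exact P.mem_part (Finset.mem_univ v)
    exact hind (P.part u) (P.part_mem.mpr (Finset.mem_univ u)) u (P.mem_part (Finset.mem_univ u)) v hv huv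
  have hcol : G.Colorable r := by
    have := C.colorable
    rwa [Fintype.card_coe, hcard] at this
  have hle := hcol.chromaticNumber_le
  rw [hk] at hle
  exact absurd (Nat.cast_le.mp hle) (by omega)


lemma numPartitions_le [LinearOrder V] (G : SimpleGraph V) [DecidableRel G.Adj] (r : ℕ) :
    numPartitions G r ≤
      ((Finset.univ.filter (fun z : Sym2 V => ¬ z.IsDiag ∧ z ∉ G.edgeFinset)).card).choose
        (Fintype.card V - r) := by
  classical
  set NE := Finset.univ.filter (fun z : Sym2 V => ¬ z.IsDiag ∧ z ∉ G.edgeFinset) with hNE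
  have := Nat.card_le_card_of_injective
    (α := {P : Finpartition (Finset.univ : Finset V) //
      P.parts.card = r ∧ ∀ p ∈ P.parts, ∀ u ∈ p, ∀ v ∈ p, ¬ G.Adj u v})
    (β := {S : Finset (Sym2 V) // S ∈ NE.powersetCard (Fintype.card V - r)})
    (fun P => ⟨encode P.1, by
      rw [Finset.mem_powersetCard]
      exact ⟨encode_subset_ne G P.1 P.2.2, by rw [card_encode, P.2.1]⟩⟩)
    (by
      intro P Q h
      simp only [Subtype.mk_eq_mk] at h
      exact Subtype.ext (encode_injective h))
  have h2 : Nat.card {S : Finset (Sym2 V) // S ∈ NE.powersetCard (Fintype.card V - r)}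
      = NE.card.choose (Fintype.card V - r) := by
    rw [Nat.card_eq_fintype_card, Fintype.card_coe, Finset.card_powersetCard]
  rw [h2] at this
  exact this

end Aux

set_option maxHeartbeats 1600000 in
/-- If `G` is a connected `k`-chromatic graph of order `n` and size `m` with `k ≥ 4` and
`m > C(k,2) + n - k`, then `π(G,x) < (x)_↓k · (x-1)^(n-k)` for every real
`x > n - 2 + (C(n,2) - C(k,2) - n + k)^2`. -/
theorem chromPolyR_lt_of_large {V : Type} [Fintype V] [DecidableEq V] (G : SimpleGraph V)
    [DecidableRel G.Adj] (n m k : ℕ) (hn : Fintype.card V = n)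
    (hm : G.edgeFinset.card = m) (hconn : G.Connected) (hk : G.chromaticNumber = k)
    (hk4 : 4 ≤ k) (hsize : k.choose 2 + n - k < m) (x : ℝ)
    (hx : (n : ℝ) - 2 + ((n.choose 2 : ℝ) - k.choose 2 - n + k) ^ 2 < x) :
    chromPolyR G x < (descPochhammer ℝ k).eval x * (x - 1) ^ (n - k) := by
  classical
  letI : LinearOrder V := LinearOrder.lift' (Fintype.equivFin V) (Fintype.equivFin V).injective
  have hk1 : 1 ≤ k := by omega
  have hkn : k ≤ n := by
    have hcol := G.colorable_of_fintype
    have hcn := hcol.chromaticNumber_le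
    rw [hk, hn] at hcn
    exact_mod_cast hcn
  have hmn : m ≤ n.choose 2 := by
    rw [← hm, ← hn]; exact G.card_edgeFinset_le_card_choose_two
  have hn1 : k + 1 ≤ n := by
    rcases Nat.lt_or_ge k n with h | h
    · omega
    · have hnk : n = k := le_antisymm h hkn
      rw [hnk] at hsize hmn
      omega
  obtain ⟨q, rfl⟩ : ∃ q, n = q + 2 := ⟨n - 2, by omega⟩
  -- the D number
  set Dn : ℕ := ∑ i ∈ Finset.Ico (k-1) (q+1), i with hDn_def
  have hDn : Dn + (k.choose 2 + ((q+2) - k)) = (q+2).choose 2 := by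
    have g1 := gauss_sum (q+2)
    have g2 := gauss_sum k
    have g3 : (∑ i ∈ Finset.Ico 0 k, i) + ∑ i ∈ Finset.Ico k (q+2), i
        = ∑ i ∈ Finset.Ico 0 (q+2), i :=
      Finset.sum_Ico_consecutive _ (Nat.zero_le k) (by omega)
    have g4 : ∑ i ∈ Finset.Ico (k-1) (q+1+1), i = (∑ i ∈ Finset.Ico (k-1) (q+1), i) + (q+1) :=
      Finset.sum_Ico_succ_top (by omega) _
    have g5 : ∑ i ∈ Finset.Ico (k-1) (q+2), i = (k-1) + ∑ i ∈ Finset.Ico (k-1+1) (q+2), i :=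
      Finset.sum_eq_sum_Ico_succ_bot (by omega) _
    have hk1' : k - 1 + 1 = k := by omega
    rw [hk1'] at g5
    rw [show q+1+1 = q+2 from rfl] at g4
    rw [Finset.range_eq_Ico] at g1 g2
    omega
  set N : ℕ := (q+2).choose 2 - m with hN_def
  have hND : N + 1 ≤ Dn := by omega
  have hDreal : (((q+2).choose 2 : ℝ) - k.choose 2 - (q+2) + k) = (Dn : ℝ) := by
    have : (Dn:ℝ) + ((k.choose 2 : ℝ) + ((q+2:ℕ) - (k:ℕ) : ℕ)) = ((q+2).choose 2 : ℝ) := by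
      exact_mod_cast congrArg (Nat.cast : ℕ → ℝ) hDn
    have hc : (((q+2) - k : ℕ) : ℝ) = (q:ℝ) + 2 - k := by
      push_cast [Nat.cast_sub (show k ≤ q+2 by omega)]
      ring
    rw [hc] at this
    push_cast
    push_cast at this
    linarith
  have hxD : ((q:ℝ) + 2) - 2 + (Dn:ℝ)^2 < x := by
    push_cast at hx
    rw [hDreal] at hx
    convert hx using 2
  have hDn1 : 1 ≤ Dn := by omega
  have hDnR : (1:ℝ) ≤ (Dn:ℝ) := by exact_mod_cast hDn1
  have hx1 : ((q:ℝ) + 2) - 1 < x := by nlinarith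
  -- positivity of descPochhammer values
  have hP : ∀ r : ℕ, r ≤ q + 2 → 0 < (descPochhammer ℝ r).eval x := by
    intro r hr
    apply dp_pos
    have : (r:ℝ) ≤ (q:ℝ) + 2 := by exact_mod_cast hr
    linarith
  -- bound on the number of partitions
  have hbound : ∀ r : ℕ, numPartitions G r ≤ N.choose ((q+2) - r) := by
    intro r
    have h := numPartitions_le G r
    rwa [ne_card, hn, hm] at h
  -- the expansion coefficients
  obtain ⟨c, hlo, hhi, htop, hsub, hid⟩ := expand_desc k hk1 ((q+2) - k)
  have hkt : k + ((q+2) - k) = q + 2 := by omega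
  rw [hkt] at htop hid
  rw [hkt] at hsub
  simp only [show q+2-1 = q+1 from rfl] at hsub
  have hctop : c (q+2) = 1 := htop
  have hcsub : c (q+1) = Dn := by
    rw [hsub (by omega)]
  -- rewrite the goal
  rw [hid x]
  unfold chromPolyR
  rw [hn]
  -- restrict the sum on the left
  have hrestrict : ∑ r ∈ Finset.Icc 1 (q+2), (numPartitions G r : ℝ) * (descPochhammer ℝ r).eval x
      = ∑ r ∈ Finset.Icc k (q+2), (numPartitions G r : ℝ) * (descPochhammer ℝ r).eval x := by
    apply (Finset.sum_subset (Finset.Icc_subset_Icc (by omega) le_rfl) ?_).symm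
    intro r hr hr'
    simp only [Finset.mem_Icc] at hr hr'
    have : r < k := by omega
    rw [numPartitions_eq_zero_of_lt G hk this]
    simp
  rw [hrestrict]
  -- peel the top two terms off both sides
  have peel : ∀ f : ℕ → ℝ, ∑ r ∈ Finset.Icc k (q+2), f r
      = (∑ r ∈ Finset.Icc k q, f r) + f (q+1) + f (q+2) := by
    intro f
    rw [show q+2 = (q+1)+1 from rfl, Finset.sum_Icc_succ_top (by omega),
      show q+1 = q+1 from rfl, Finset.sum_Icc_succ_top (by omega)]
  rw [peel, peel]
  -- compare the top terms
  have htopcmp : (numPartitions G (q+2) : ℝ) * (descPochhammer ℝ (q+2)).eval x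
      ≤ (c (q+2) : ℝ) * (descPochhammer ℝ (q+2)).eval x := by
    apply mul_le_mul_of_nonneg_right _ (hP (q+2) le_rfl).le
    rw [hctop]
    have := hbound (q+2)
    simp only [Nat.sub_self, Nat.choose_zero_right] at this
    exact_mod_cast this
  -- the core strict inequality
  have hcore : ∑ r ∈ Finset.Icc k q, (numPartitions G r : ℝ) * (descPochhammer ℝ r).eval x
      < (descPochhammer ℝ (q+1)).eval x := by
    rcases Nat.eq_zero_or_pos N with hN | hN
    · have hz : ∀ r ∈ Finset.Icc k q, (numPartitions G r : ℝ) * (descPochhammer ℝ r).eval x = 0 := by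
        intro r hr
        simp only [Finset.mem_Icc] at hr
        have h1 := hbound r
        rw [hN, Nat.choose_eq_zero_of_lt (by omega)] at h1
        have : numPartitions G r = 0 := by omega
        rw [this]
        simp
      rw [Finset.sum_eq_zero hz]
      exact hP (q+1) (by omega)
    · -- N ≥ 1
      set y : ℝ := x - q with hy_def
      have hNR : (1:ℝ) ≤ (N:ℝ) := by exact_mod_cast hN
      have hDnN : ((N:ℝ) + 1) ≤ (Dn:ℝ) := by exact_mod_cast hND
      have hy : ((N:ℝ)+1)^2 < y := by
        have h1 : (Dn:ℝ)^2 < y := by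
          rw [hy_def]; linarith [hxD]
        nlinarith
      have hy0 : 0 < y := by nlinarith
      have hyN : (N:ℝ) < y := by nlinarith
      set w : ℝ := (N:ℝ)/y with hw_def
      have hw0 : 0 ≤ w := div_nonneg (by linarith) hy0.le
      have hw1 : w < 1 := (div_lt_one hy0).mpr hyN
      have hterm : ∀ r ∈ Finset.Icc k q,
          (numPartitions G r : ℝ) * (descPochhammer ℝ r).eval x
            ≤ (descPochhammer ℝ (q+1)).eval x * ((N:ℝ) * w ^ (q+1-r)) := by
        intro r hr
        simp only [Finset.mem_Icc] at hr
        have hrq : r ≤ q := hr.2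
        have hgrow : (descPochhammer ℝ r).eval x * y ^ (q+1-r)
            ≤ (descPochhammer ℝ (q+1)).eval x := by
          have h := dp_grow hy0 (q+1-r) r (hP r (by omega)) ?_
          · rwa [show r + (q+1-r) = q+1 from by omega] at h
          · have h1 : ((r:ℝ) + ((q+1-r:ℕ):ℝ)) = (q:ℝ)+1 := by
              push_cast [Nat.cast_sub (show r ≤ q+1 by omega)]
              ring
            rw [h1, hy_def]
            push_cast
            ring_nf
            linarith [le_refl ((q:ℝ))]
        have ha : (numPartitions G r : ℝ) ≤ (N:ℝ) ^ ((q+2)-r) := by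
          have h1 := (hbound r).trans (Nat.choose_le_pow N ((q+2)-r))
          exact_mod_cast h1
        have hsplit : ((q+2)-r) = (q+1-r) + 1 := by omega
        have hyPow : 0 < y ^ (q+1-r) := pow_pos hy0 _
        have hPr : 0 < (descPochhammer ℝ r).eval x := hP r (by omega)
        calc (numPartitions G r : ℝ) * (descPochhammer ℝ r).eval x
            ≤ (N:ℝ) ^ ((q+2)-r) * (descPochhammer ℝ r).eval x := by
              apply mul_le_mul_of_nonneg_right ha hPr.le
          _ = (N:ℝ) * ((N:ℝ)^(q+1-r) * (descPochhammer ℝ r).eval x) := by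
              rw [hsplit, pow_succ]
              ring
          _ ≤ (descPochhammer ℝ (q+1)).eval x * ((N:ℝ) * w ^ (q+1-r)) := by
              rw [hw_def, div_pow]
              rw [show (descPochhammer ℝ (q+1)).eval x * ((N:ℝ) * ((N:ℝ)^(q+1-r) / y^(q+1-r)))
                  = (N:ℝ) * ((N:ℝ)^(q+1-r) * ((descPochhammer ℝ (q+1)).eval x / y^(q+1-r))) from by ring]
              apply mul_le_mul_of_nonneg_left _ (by linarith)
              apply mul_le_mul_of_nonneg_left _ (pow_nonneg (by linarith) _)
              rw [le_div_iff₀ hyPow]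
              exact hgrow
      calc ∑ r ∈ Finset.Icc k q, (numPartitions G r : ℝ) * (descPochhammer ℝ r).eval x
          ≤ ∑ r ∈ Finset.Icc k q, (descPochhammer ℝ (q+1)).eval x * ((N:ℝ) * w ^ (q+1-r)) :=
            Finset.sum_le_sum hterm
        _ = (descPochhammer ℝ (q+1)).eval x * ((N:ℝ) * ∑ r ∈ Finset.Icc k q, w ^ (q+1-r)) := by
            rw [Finset.mul_sum, Finset.mul_sum]
        _ ≤ (descPochhammer ℝ (q+1)).eval x * ((N:ℝ) * (w / (1-w))) := by
            apply mul_le_mul_of_nonneg_left _ (hP (q+1) (by omega)).le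
            apply mul_le_mul_of_nonneg_left _ (by linarith)
            have hre : ∑ r ∈ Finset.Icc k q, w ^ (q+1-r) = ∑ j ∈ Finset.Icc 1 (q+1-k), w ^ j := by
              apply Finset.sum_nbij' (fun r => q+1-r) (fun j => q+1-j)
              · intro a ha; simp only [Finset.mem_Icc] at ha ⊢; omega
              · intro a ha; simp only [Finset.mem_Icc] at ha ⊢; omega
              · intro a ha; simp only [Finset.mem_Icc] at ha; omega
              · intro a ha; simp only [Finset.mem_Icc] at ha; omega
              · intro a ha; rfl
            rw [hre]
            exact geo_aux hw0 hw1 _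
        _ < (descPochhammer ℝ (q+1)).eval x * 1 := by
            apply mul_lt_mul_of_pos_left _ (hP (q+1) (by omega))
            have h1w : 0 < 1 - w := by linarith
            have hkey : (N:ℝ) * w + w < 1 := by
              have he : (N:ℝ) * w + w = (((N:ℝ)+1) * (N:ℝ)) / y := by
                rw [hw_def]; ring
              rw [he, div_lt_one hy0]
              nlinarith
            calc (N:ℝ) * (w / (1-w)) = ((N:ℝ) * w) / (1-w) := by ring
              _ < 1 := (div_lt_one h1w).mpr (by linarith)
        _ = (descPochhammer ℝ (q+1)).eval x := mul_one _
  -- middle comparison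
  have hmidP : 0 < (descPochhammer ℝ (q+1)).eval x := hP (q+1) (by omega)
  have hmid : (numPartitions G (q+1) : ℝ) * (descPochhammer ℝ (q+1)).eval x
      ≤ (N:ℝ) * (descPochhammer ℝ (q+1)).eval x := by
    apply mul_le_mul_of_nonneg_right _ hmidP.le
    have h1 := hbound (q+1)
    rw [show (q+2)-(q+1) = 1 from by omega, Nat.choose_one_right] at h1
    exact_mod_cast h1
  have hcpos : 0 ≤ ∑ r ∈ Finset.Icc k q, (c r : ℝ) * (descPochhammer ℝ r).eval x := by
    apply Finset.sum_nonneg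
    intro r hr
    simp only [Finset.mem_Icc] at hr
    exact mul_nonneg (Nat.cast_nonneg _) (hP r (by omega)).le
  have hcmid : ((N:ℝ)+1) * (descPochhammer ℝ (q+1)).eval x
      ≤ (c (q+1) : ℝ) * (descPochhammer ℝ (q+1)).eval x := by
    apply mul_le_mul_of_nonneg_right _ hmidP.le
    rw [hcsub]
    exact_mod_cast hND
  linarith [hcore, htopcmp, hmid, hcpos, hcmid]
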